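/- Let θ₁, θ₂ : ℝ → ℝ be C¹ functions with θ₁(0) = θ₂(0) = π/2, θᵢ'(0) < 0, and θᵢ(x) ∈ (0, π/2) for x > 0. For t ∈ [0,1] define θᵗ(x) = arcsin(t sin θ₁(x) + (1-t) sin θ₂(x)) for x ≥ 0. Then θᵗ is differentiable at 0 from the right and its right derivative at 0 equals -√(t·θ₁'(0)² + (1-t)·θ₂'(0)²). -/

import Mathlib

/-!
Since `θᵢ 0 = π / 2`, we have `1 - sin θᵢ x = 2 sin² ((θᵢ x - π / 2) / 2) ~ θᵢ'(0)² x² / 2`, so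
`F = t sin θ₁ + (1 - t) sin θ₂` satisfies `1 - F x ~ L x²` with `2 L = t θ₁'(0)² + (1 - t) θ₂'(0)²`.
Near `1` we have `arcsin F = π / 2 - arcsin √(1 - F²)`, where `√(1 - F²) = √((1 - F)(1 + F)) ~ √(2 L) x`
and `arcsin y ~ y` at `0`; hence `arcsin (F x) = π / 2 - √(2 L) x + o(x)` for `x > 0`.
-/

open Real Set Filter Topology

theorem tendsto_one_sub_sin_div_sq {θ : ℝ → ℝ} {d : ℝ} (hθ : HasDerivAt θ d 0)
    (h0 : θ 0 = π / 2) :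
    Tendsto (fun x => (1 - sin (θ x)) / x ^ 2) (𝓝[≠] 0) (𝓝 (d ^ 2 / 2)) := by
  have hs : HasDerivAt (fun x => sin ((θ x - π / 2) / 2)) (d / 2) 0 := by
    simpa [h0] using ((hθ.sub_const (π / 2)).div_const 2).sin
  have hlim := ((hasDerivAt_iff_tendsto_slope.mp hs).pow 2).const_mul 2
  rw [show 2 * (d / 2) ^ 2 = d ^ 2 / 2 by ring] at hlim
  refine hlim.congr fun x => ?_
  have hcos : sin (θ x) = 1 - 2 * sin ((θ x - π / 2) / 2) ^ 2 := by
    set u := (θ x - π / 2) / 2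
    rw [show θ x = 2 * u + π / 2 by ring, sin_add_pi_div_two, cos_two_mul, cos_sq']
    ring
  simp only [slope_def_field, h0, sub_self, zero_div, sin_zero, sub_zero, hcos]
  ring

theorem tendsto_one_of_tendsto_one_sub_div_sq {F : ℝ → ℝ} {L : ℝ}
    (hF : Tendsto (fun x => (1 - F x) / x ^ 2) (𝓝[>] 0) (𝓝 L)) :
    Tendsto F (𝓝[>] 0) (𝓝 1) := by
  have hx : Tendsto (fun x : ℝ => x ^ 2) (𝓝[>] 0) (𝓝 0) :=
    ((continuous_pow 2).tendsto' 0 0 (zero_pow two_ne_zero)).mono_left nhdsWithin_le_nhds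
  have hlim := tendsto_const_nhds (x := (1 : ℝ)).sub (hx.mul hF)
  rw [zero_mul, sub_zero] at hlim
  refine hlim.congr' ?_
  filter_upwards [self_mem_nhdsWithin] with x (hx : 0 < x)
  field_simp
  ring

theorem tendsto_sqrt_one_sub_sq_div {F : ℝ → ℝ} {L : ℝ}
    (hF : Tendsto (fun x => (1 - F x) / x ^ 2) (𝓝[>] 0) (𝓝 L)) :
    Tendsto (fun x => √(1 - F x ^ 2) / x) (𝓝[>] 0) (𝓝 √(2 * L)) := by
  have hF1 := tendsto_one_of_tendsto_one_sub_div_sq hF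
  have hsq := (hF.mul (tendsto_const_nhds (x := (1 : ℝ)).add hF1)).sqrt
  rw [show L * (1 + 1) = 2 * L by ring] at hsq
  refine hsq.congr' ?_
  filter_upwards [self_mem_nhdsWithin] with x (hx : 0 < x)
  rw [div_mul_eq_mul_div, show (1 - F x) * (1 + F x) = 1 - F x ^ 2 by ring,
    sqrt_div' _ (sq_nonneg x), sqrt_sq hx.le]

theorem hasDerivWithinAt_arcsin_Ici_of_tendsto_one_sub_div_sq {F : ℝ → ℝ} {L : ℝ} (h0 : F 0 = 1)
    (hF : Tendsto (fun x => (1 - F x) / x ^ 2) (𝓝[>] 0) (𝓝 L)) :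
    HasDerivWithinAt (fun x => arcsin (F x)) (-√(2 * L)) (Ici 0) 0 := by
  have hF1 := tendsto_one_of_tendsto_one_sub_div_sq hF
  have hy0 : Tendsto (fun x => √(1 - F x ^ 2)) (𝓝[>] 0) (𝓝 0) := by
    simpa using ((hF1.pow 2).const_sub 1).sqrt
  have hdslope : Tendsto (dslope arcsin 0) (𝓝 0) (𝓝 1) := by
    have hd := hasDerivAt_arcsin (x := 0) (by norm_num) (by norm_num)
    simpa [dslope_same, hd.deriv] using
      (continuousAt_dslope_same.mpr hd.differentiableAt).tendsto
  have hlim := ((hdslope.comp hy0).mul (tendsto_sqrt_one_sub_sq_div hF)).neg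
  rw [one_mul] at hlim
  rw [hasDerivWithinAt_iff_tendsto_slope, Ici_sdiff_left]
  refine hlim.congr' ?_
  filter_upwards [self_mem_nhdsWithin, hF1.eventually (lt_mem_nhds one_pos)] with x hx hFx
  -- `arcsin y = y * dslope arcsin 0 y` avoids dividing by `y = √(1 - F x ^ 2)`, which may vanish.
  have harcsin := sub_smul_dslope arcsin 0 √(1 - F x ^ 2)
  rw [smul_eq_mul, sub_zero, arcsin_zero, sub_zero] at harcsin
  simp only [Function.comp_apply, slope_def_field, h0, arcsin_one,
    arcsin_eq_pi_div_two_sub_arccos (F x), arccos_eq_arcsin hFx.le, ← harcsin]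
  ring

theorem stmt_4_general (θ₁ θ₂ : ℝ → ℝ) (h₁ : ContDiff ℝ 1 θ₁) (h₂ : ContDiff ℝ 1 θ₂)
    (h10 : θ₁ 0 = π / 2) (h20 : θ₂ 0 = π / 2)
    (t : ℝ) :
    HasDerivWithinAt
      (fun x : ℝ => Real.arcsin (t * Real.sin (θ₁ x) + (1 - t) * Real.sin (θ₂ x)))
      (-Real.sqrt (t * (deriv θ₁ 0) ^ 2 + (1 - t) * (deriv θ₂ 0) ^ 2))
      (Ici 0) 0 := by
  have hθ₁ := (h₁.differentiable one_ne_zero 0).hasDerivAt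
  have hθ₂ := (h₂.differentiable one_ne_zero 0).hasDerivAt
  have hF : Tendsto (fun x => (1 - (t * sin (θ₁ x) + (1 - t) * sin (θ₂ x))) / x ^ 2) (𝓝[>] 0)
      (𝓝 (t * (deriv θ₁ 0 ^ 2 / 2) + (1 - t) * (deriv θ₂ 0 ^ 2 / 2))) := by
    refine ((((tendsto_one_sub_sin_div_sq hθ₁ h10).const_mul t).add
      ((tendsto_one_sub_sin_div_sq hθ₂ h20).const_mul (1 - t))).mono_left
      (nhdsWithin_mono _ fun x hx => ne_of_gt hx)).congr fun x => ?_
    ring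
  convert hasDerivWithinAt_arcsin_Ici_of_tendsto_one_sub_div_sq (by simp [h10, h20]) hF using 3
  ring

theorem stmt_4 (θ₁ θ₂ : ℝ → ℝ) (h₁ : ContDiff ℝ 1 θ₁) (h₂ : ContDiff ℝ 1 θ₂)
    (h10 : θ₁ 0 = π / 2) (h20 : θ₂ 0 = π / 2)
    (hd1 : deriv θ₁ 0 < 0) (hd2 : deriv θ₂ 0 < 0)
    (hr1 : ∀ x : ℝ, 0 < x → θ₁ x ∈ Ioo 0 (π / 2))
    (hr2 : ∀ x : ℝ, 0 < x → θ₂ x ∈ Ioo 0 (π / 2))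
    (t : ℝ) (ht : t ∈ Icc (0:ℝ) 1) :
    HasDerivWithinAt
      (fun x : ℝ => Real.arcsin (t * Real.sin (θ₁ x) + (1 - t) * Real.sin (θ₂ x)))
      (-Real.sqrt (t * (deriv θ₁ 0) ^ 2 + (1 - t) * (deriv θ₂ 0) ^ 2))
      (Ici 0) 0 :=
  stmt_4_general θ₁ θ₂ h₁ h₂ h10 h20 t
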